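/- Let E ⊆ ℝ² be Lebesgue measurable, let x ∈ ℝ² and ε > 0. Then λ²((E ∩ B_ε(x)) \ {x}) ≤ ε² · λ¹({θ ∈ [0,π) : there exists t ∈ (−ε,ε) \ {0} with x + t(cos θ, sin θ) ∈ E}), where the measure of the angular set is understood as Lebesgue outer measure if the set is not measurable. -/

import Mathlib

/-!
Write the punctured ball around `x` in polar coordinates `x + r (cos θ, sin θ)` with
`0 < r < ε`, `-π < θ < π`. A point of `E` there has angle `θ` or `θ + π` in the angular set,
according to the sign of `θ`, so the angles that occur form a set of measure at most twice
that of the angular set, while the radial factor contributes `∫₀^ε r dr = ε² / 2`.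
-/

open MeasureTheory Set Real

noncomputable def ofProd (p : ℝ × ℝ) : EuclideanSpace ℝ (Fin 2) :=
  (WithLp.equiv 2 (Fin 2 → ℝ)).symm ![p.1, p.2]

noncomputable def unitVec (θ : ℝ) : EuclideanSpace ℝ (Fin 2) := ofProd (cos θ, sin θ)

theorem volume_preserving_ofProd : MeasurePreserving ofProd := by
  have hcomp : ofProd = WithLp.toLp 2 ∘ (MeasurableEquiv.finTwoArrow (α := ℝ)).symm := rfl
  rw [hcomp]
  exact (PiLp.volume_preserving_toLp (Fin 2)).comp (volume_preserving_finTwoArrow ℝ).symm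

theorem ofProd_smul (r : ℝ) (p : ℝ × ℝ) : ofProd (r • p) = r • ofProd p := by
  ext i; fin_cases i <;> simp [ofProd]

theorem ofProd_polarCoord_symm (p : ℝ × ℝ) : ofProd (polarCoord.symm p) = p.1 • unitVec p.2 := by
  rw [unitVec, ← ofProd_smul]
  simp [polarCoord_symm_apply]

theorem norm_unitVec (θ : ℝ) : ‖unitVec θ‖ = 1 := by
  simp [unitVec, ofProd, EuclideanSpace.norm_eq, Fin.sum_univ_two]

theorem unitVec_add_pi (θ : ℝ) : unitVec (θ + π) = -unitVec θ := by
  ext i; fin_cases i <;> simp [unitVec, ofProd]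

theorem setLIntegral_ofReal_Ioo_zero {ε : ℝ} (hε : 0 ≤ ε) :
    ∫⁻ r in Ioo 0 ε, ENNReal.ofReal r = ENNReal.ofReal (ε ^ 2 / 2) := by
  rw [← ofReal_integral_eq_lintegral_ofReal, integral_Ioc_eq_integral_Ioo.symm,
    ← intervalIntegral.integral_of_le hε, integral_id]
  · ring_nf
  · exact continuous_id.integrableOn_Icc.mono_set Ioo_subset_Icc_self
  · exact ae_restrict_of_forall_mem measurableSet_Ioo fun r hr => hr.1.le

theorem volume_le_of_polarCoord_symm_preimage_subset {T : Set (ℝ × ℝ)} (hT : MeasurableSet T)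
    {ε : ℝ} (hε : 0 ≤ ε) {Θ : Set ℝ}
    (h : polarCoord.target ∩ polarCoord.symm ⁻¹' T ⊆ Iio ε ×ˢ Θ) :
    volume T ≤ ENNReal.ofReal (ε ^ 2 / 2) * volume Θ := by
  have hbound : ∀ p ∈ polarCoord.target, ENNReal.ofReal p.1 • T.indicator 1 (polarCoord.symm p)
      ≤ (Ioo 0 ε ×ˢ Θ).indicator (fun q => ENNReal.ofReal q.1) p := by
    intro p hp
    by_cases hpT : polarCoord.symm p ∈ T
    · obtain ⟨hpε, hpΘ⟩ := h ⟨hp, hpT⟩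
      have hp' : p ∈ Ioo 0 ε ×ˢ Θ := ⟨⟨hp.1, hpε⟩, hpΘ⟩
      rw [indicator_of_mem hpT, indicator_of_mem hp']
      simp
    · rw [indicator_of_notMem hpT, smul_zero]
      exact zero_le
  calc volume T = ∫⁻ p, T.indicator 1 p := (lintegral_indicator_one hT).symm
    _ = ∫⁻ p in polarCoord.target, ENNReal.ofReal p.1 • T.indicator 1 (polarCoord.symm p) :=
      (lintegral_comp_polarCoord_symm _).symm
    _ ≤ ∫⁻ p in polarCoord.target, (Ioo 0 ε ×ˢ Θ).indicator (fun q => ENNReal.ofReal q.1) p :=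
      setLIntegral_mono' polarCoord.open_target.measurableSet hbound
    _ ≤ ∫⁻ p in Ioo 0 ε ×ˢ Θ, ENNReal.ofReal p.1 :=
      (setLIntegral_le_lintegral _ _).trans (lintegral_indicator_le _ _)
    _ = (∫⁻ r in Ioo 0 ε, ENNReal.ofReal r) * ∫⁻ _ in Θ, 1 := by
      rw [Measure.volume_eq_prod, ← Measure.prod_restrict]
      simpa using lintegral_prod_mul (f := ENNReal.ofReal) (g := fun _ => 1)
        (μ := volume.restrict (Ioo 0 ε)) (ν := volume.restrict Θ)
        ENNReal.measurable_ofReal.aemeasurable aemeasurable_const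
    _ = ENNReal.ofReal (ε ^ 2 / 2) * volume Θ := by
      rw [setLIntegral_ofReal_Ioo_zero hε, setLIntegral_one]

def lineHitAngles (E : Set (EuclideanSpace ℝ (Fin 2))) (x : EuclideanSpace ℝ (Fin 2)) (ε : ℝ) :
    Set ℝ :=
  {θ | θ ∈ Ico 0 π ∧ ∃ t ∈ Ioo (-ε) ε, t ≠ 0 ∧ x + t • unitVec θ ∈ E}

theorem mem_lineHitAngles_or_add_pi {E : Set (EuclideanSpace ℝ (Fin 2))}
    {x : EuclideanSpace ℝ (Fin 2)} {ε r θ : ℝ} (hr : 0 < r) (hrε : r < ε) (hθ : θ ∈ Ioo (-π) π)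
    (hxE : x + r • unitVec θ ∈ E) :
    θ ∈ lineHitAngles E x ε ∪ (· + π) ⁻¹' lineHitAngles E x ε := by
  rcases le_or_gt 0 θ with hθ₀ | hθ₀
  · exact Or.inl ⟨⟨hθ₀, hθ.2⟩, r, ⟨by linarith, hrε⟩, hr.ne', hxE⟩
  · refine Or.inr ⟨⟨by linarith [hθ.1], by linarith⟩, -r, ⟨by linarith, by linarith⟩,
      neg_ne_zero.2 hr.ne', ?_⟩
    rwa [unitVec_add_pi, neg_smul_neg]

theorem volume_union_preimage_add_le (A : Set ℝ) (c : ℝ) :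
    volume (A ∪ (· + c) ⁻¹' A) ≤ 2 * volume A :=
  (measure_union_le _ _).trans_eq (by rw [measure_preimage_add_right, two_mul])

/-- Polar-coordinate estimate: the planar measure of `(E ∩ B_ε(x)) \ {x}` is at most
`ε²` times the (outer) measure of the set of angles `θ ∈ [0, π)` whose line through `x`
meets `E` at some parameter `t ∈ (-ε, ε) \ {0}`. -/
theorem measure_inter_ball_le_angular_measure
    (E : Set (EuclideanSpace ℝ (Fin 2))) (hE : MeasurableSet E)
    (x : EuclideanSpace ℝ (Fin 2)) (ε : ℝ) (hε : 0 < ε) :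
    volume ((E ∩ Metric.ball x ε) \ {x}) ≤
      ENNReal.ofReal (ε ^ 2) *
        volume {θ : ℝ | θ ∈ Set.Ico 0 Real.pi ∧
          ∃ t ∈ Set.Ioo (-ε) ε, t ≠ 0 ∧
            x + t • (WithLp.equiv 2 (Fin 2 → ℝ)).symm ![Real.cos θ, Real.sin θ] ∈ E} := by
  set A := lineHitAngles E x ε
  set S := (E ∩ Metric.ball x ε) \ {x}
  have hS : MeasurableSet S := (hE.inter measurableSet_ball).diff (measurableSet_singleton x)
  have hF : MeasurePreserving (fun p => x + ofProd p) :=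
    (measurePreserving_add_left volume x).comp volume_preserving_ofProd
  have hpolar : polarCoord.target ∩ polarCoord.symm ⁻¹' ((fun p => x + ofProd p) ⁻¹' S) ⊆
      Iio ε ×ˢ (A ∪ (· + π) ⁻¹' A) := by
    rintro ⟨r, θ⟩ ⟨⟨hr : 0 < r, hθ⟩, ⟨hxE, hball⟩, -⟩
    simp only [ofProd_polarCoord_symm] at hxE hball
    have hrε : r < ε := by
      simpa [norm_smul, norm_unitVec, abs_of_pos hr] using hball
    exact ⟨hrε, mem_lineHitAngles_or_add_pi hr hrε hθ hxE⟩
  calc volume S = volume ((fun p => x + ofProd p) ⁻¹' S) :=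
        (hF.measure_preimage hS.nullMeasurableSet).symm
    _ ≤ ENNReal.ofReal (ε ^ 2 / 2) * volume (A ∪ (· + π) ⁻¹' A) :=
        volume_le_of_polarCoord_symm_preimage_subset (hF.measurable hS) hε.le hpolar
    _ ≤ ENNReal.ofReal (ε ^ 2 / 2) * (2 * volume A) := by
        gcongr; exact volume_union_preimage_add_le A π
    _ = ENNReal.ofReal (ε ^ 2) * volume A := by
        rw [← mul_assoc, ← ENNReal.ofReal_ofNat 2, ← ENNReal.ofReal_mul (by positivity),
          div_mul_cancel₀ _ two_ne_zero]
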